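/- arXiv:0909.2724 — 7 statements merged into one kernel-verified Lean document; each statement's English description precedes it below -/
import Mathlib

section
/- Let R be a factorial integral domain and P, Q ∈ R[X] primitive polynomials of degrees m and n respectively. Then the Sylvester map R[X]_{<n} ⊕ R[X]_{<m} → R[X]_{<m+n} sending (r, s) to rP + sQ is injective if and only if P and Q are coprime (i.e., have no nonconstant common divisor). -/
/-!
A nonconstant common factor `d`, with `P = d * p` and `Q = d * q`, gives the nonzero kernel
element `(q, -p)` of the Sylvester map, whose components have degrees below `n` and `m`.
Conversely, primitivity of `P` makes every common divisor of `P` and `Q` a unit. Since `R[X]` is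
factorial, `r * P + s * Q = 0` then gives `P ∣ s`, so `s = 0` because `deg s < deg P`, and then
`r = 0`.
-/

open Polynomial Function

namespace Polynomial

theorem IsPrimitive.isRelPrime {R : Type*} [CommSemiring R] {P Q : R[X]} (hP : P.IsPrimitive)
    (h : ∀ d : R[X], d ∣ P → d ∣ Q → d.degree ≤ 0) : IsRelPrime P Q := by
  intro d hdP hdQ
  obtain ⟨c, rfl⟩ : ∃ c, d = C c := ⟨_, eq_C_of_degree_le_zero (h d hdP hdQ)⟩
  exact isUnit_C.mpr (hP c hdP)

theorem degree_lt_natDegree_mul_of_degree_pos {R : Type*} [Semiring R] [NoZeroDivisors R]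
    {d : R[X]} (hd : 0 < d.degree) (p : R[X]) : p.degree < (d * p).natDegree := by
  rcases eq_or_ne p 0 with rfl | hp
  · simp
  have hd0 : d ≠ 0 := ne_zero_of_degree_gt hd
  have hdn : 0 < d.natDegree := natDegree_pos_iff_degree_pos.mpr hd
  rw [natDegree_mul hd0 hp, degree_eq_natDegree hp]
  exact_mod_cast (by omega : p.natDegree < d.natDegree + p.natDegree)

variable {R : Type*} [CommRing R] [NoZeroDivisors R] {m n : ℕ} {f g : R[X]}

theorem sylvesterMap_injective [DecompositionMonoid R[X]] (hfg : IsRelPrime f g) (hg0 : g ≠ 0)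
    (hf : f.natDegree ≤ m) (hg : g.natDegree = n) : Injective (sylvesterMap f g hf hg.le) := by
  rw [injective_iff_map_eq_zero]
  rintro ⟨⟨p, _⟩, ⟨q, hq⟩⟩ hpq
  have hsum : f * q + g * p = 0 := by simpa using congrArg Subtype.val hpq
  have hgq : g ∣ q := hfg.symm.dvd_of_dvd_mul_left ⟨-p, by linear_combination hsum⟩
  have hq0 : q = 0 := eq_zero_of_dvd_of_degree_lt hgq <| by
    rwa [degree_eq_natDegree hg0, hg, ← mem_degreeLT]
  subst hq0
  have hp0 : p = 0 := by simpa [hg0] using hsum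
  subst hp0
  rfl

theorem not_injective_sylvesterMap_of_dvd (hg0 : g ≠ 0) (hf : f.natDegree = m)
    (hg : g.natDegree = n) {d : R[X]} (hd : 0 < d.degree) (hdf : d ∣ f) (hdg : d ∣ g) :
    ¬Injective (sylvesterMap f g hf.le hg.le) := by
  obtain ⟨f', rfl⟩ := hdf
  obtain ⟨g', rfl⟩ := hdg
  have hf' : f' ∈ R[X]_m := by
    rw [mem_degreeLT, ← hf]
    exact degree_lt_natDegree_mul_of_degree_pos hd f'
  have hg' : -g' ∈ R[X]_n := by
    rw [mem_degreeLT, degree_neg, ← hg]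
    exact degree_lt_natDegree_mul_of_degree_pos hd g'
  intro hinj
  have hker := (injective_iff_map_eq_zero _).mp hinj (⟨f', hf'⟩, ⟨-g', hg'⟩) <| by
    ext1
    simp only [sylvesterMap_apply_coe, ZeroMemClass.coe_zero]
    ring
  exact right_ne_zero_of_mul hg0 (neg_eq_zero.mp (congrArg (fun x => (x.2 : R[X])) hker))

end Polynomial

theorem sylvester_injective_iff_coprime_general (R : Type) [CommRing R] [IsDomain R]
    [UniqueFactorizationMonoid R] (P Q : R[X]) (hP : P.IsPrimitive)
    (m n : ℕ) (hm : P.natDegree = m) (hn : Q.natDegree = n) :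
    Function.Injective
        (fun rs : Polynomial.degreeLT R n × Polynomial.degreeLT R m =>
          (rs.1 : R[X]) * P + (rs.2 : R[X]) * Q) ↔
      ¬ ∃ d : R[X], 0 < d.degree ∧ d ∣ P ∧ d ∣ Q := by
  have hP0 := hP.ne_zero
  have hsylvester : (fun rs : degreeLT R n × degreeLT R m => (rs.1 : R[X]) * P + (rs.2 : R[X]) * Q)
      = (↑) ∘ sylvesterMap Q P hn.le hm.le := by
    funext rs
    rw [comp_apply, sylvesterMap_apply_coe]
    ring
  rw [hsylvester, Subtype.val_injective.of_comp_iff]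
  constructor
  · rintro hinj ⟨d, hd, hdP, hdQ⟩
    exact not_injective_sylvesterMap_of_dvd hP0 hn hm hd hdQ hdP hinj
  · intro hcoprime
    refine sylvesterMap_injective (hP.isRelPrime fun d hdP hdQ => ?_).symm hP0 hn.le hm
    exact not_lt.mp fun hd => hcoprime ⟨d, hd, hdP, hdQ⟩

/-- Let `R` be a factorial integral domain and `P, Q ∈ R[X]` primitive
polynomials of degrees `m` and `n`.  The Sylvester map
`R[X]_{<n} ⊕ R[X]_{<m} → R[X]_{<m+n}`, `(r, s) ↦ rP + sQ`, is injective if and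
only if `P` and `Q` are coprime, i.e. have no nonconstant common divisor. -/
theorem sylvester_injective_iff_coprime (R : Type) [CommRing R] [IsDomain R]
    [UniqueFactorizationMonoid R] (P Q : R[X]) (hP : P.IsPrimitive)
    (hQ : Q.IsPrimitive) (m n : ℕ) (hm : P.natDegree = m) (hn : Q.natDegree = n) :
    Function.Injective
        (fun rs : Polynomial.degreeLT R n × Polynomial.degreeLT R m =>
          (rs.1 : R[X]) * P + (rs.2 : R[X]) * Q) ↔
      ¬ ∃ d : R[X], 0 < d.degree ∧ d ∣ P ∧ d ∣ Q :=
  sylvester_injective_iff_coprime_general R P Q hP m n hm hn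
end

section
/- Let P, Q ∈ ℤ[X] be primitive coprime polynomials and suppose the Sylvester map is injective. Then any non-zero polynomial of smallest degree in the image of the Sylvester map is a constant polynomial. -/
/-!
The resultant `Res(P, Q)` is a nonzero integer, because `P` and `Q` are coprime over `ℚ`, and the
adjugate of the Sylvester matrix exhibits the constant `Res(P, Q)` as `rP + sQ` with
`deg r < deg Q` and `deg s < deg P`. So the image contains a nonzero constant, and a nonzero
element of minimal degree has degree `0`.
-/

open Polynomial

namespace Polynomial

variable {R : Type*} [CommRing R]

theorem resultant_ne_zero_of_isCoprime_map {K : Type*} [CommRing K] [IsDomain K] {φ : R →+* K}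
    (hφ : Function.Injective φ) {P Q : R[X]} (h : IsCoprime (P.map φ) (Q.map φ)) :
    P.resultant Q ≠ 0 := by
  have hK := resultant_ne_zero _ _ h
  rw [natDegree_map_eq_of_injective hφ, natDegree_map_eq_of_injective hφ,
    resultant_map_map] at hK
  exact fun h0 ↦ hK (by rw [h0, map_zero])

theorem natDegree_ne_zero_or_of_mul_add_mul_ne_zero {P Q r s : R[X]} (hr : r.degree < Q.degree)
    (hs : s.degree < P.degree) (h : r * P + s * Q ≠ 0) :
    P.natDegree ≠ 0 ∨ Q.natDegree ≠ 0 := by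
  by_contra! hdeg
  have eq_zero_of_degree_lt {p q : R[X]} (hpq : p.degree < q.degree) (hq : q.natDegree = 0) :
      p = 0 :=
    degree_eq_bot.mp <| Nat.WithBot.lt_zero_iff.mp <|
      hpq.trans_le (natDegree_eq_zero_iff_degree_le_zero.mp hq)
  have hr0 := eq_zero_of_degree_lt hr hdeg.2
  have hs0 := eq_zero_of_degree_lt hs hdeg.1
  simp [hr0, hs0] at h

theorem exists_degree_lt_C_resultant_eq_mul_add_mul {P Q : R[X]} (hP : P ≠ 0) (hQ : Q ≠ 0)
    (hdeg : P.natDegree ≠ 0 ∨ Q.natDegree ≠ 0) :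
    ∃ r s : R[X], r.degree < Q.degree ∧ s.degree < P.degree ∧
      C (P.resultant Q) = r * P + s * Q := by
  obtain ⟨r, s, hr, hs, h⟩ := exists_mul_add_mul_eq_C_resultant P Q le_rfl le_rfl hdeg
  refine ⟨r, s, degree_eq_natDegree hQ ▸ hr, degree_eq_natDegree hP ▸ hs, ?_⟩
  rw [← h]
  ring

end Polynomial

theorem smallest_degree_in_sylvester_image_is_constant_general
    (P Q : ℤ[X])
    (hcop : IsCoprime (P.map (Int.castRingHom ℚ)) (Q.map (Int.castRingHom ℚ)))
    (F : ℤ[X]) (hF : F ≠ 0)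
    (hFimg : ∃ r s : ℤ[X], r.degree < Q.degree ∧ s.degree < P.degree ∧
      F = r * P + s * Q)
    (hFmin : ∀ G : ℤ[X], G ≠ 0 →
      (∃ r s : ℤ[X], r.degree < Q.degree ∧ s.degree < P.degree ∧
        G = r * P + s * Q) → F.degree ≤ G.degree) :
    F.degree = 0 := by
  obtain ⟨r, s, hr, hs, hFrs⟩ := hFimg
  have hdeg := natDegree_ne_zero_or_of_mul_add_mul_ne_zero hr hs (hFrs ▸ hF)
  have hres : P.resultant Q ≠ 0 := resultant_ne_zero_of_isCoprime_map Int.cast_injective hcop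
  have hres_img := exists_degree_lt_C_resultant_eq_mul_add_mul (ne_zero_of_degree_gt hs)
    (ne_zero_of_degree_gt hr) hdeg
  refine le_antisymm ?_ (zero_le_degree_iff.mpr hF)
  calc F.degree ≤ (C (P.resultant Q)).degree := hFmin _ (C_ne_zero.mpr hres) hres_img
    _ = 0 := degree_C hres

/-- Let `P, Q ∈ ℤ[X]` be primitive coprime polynomials such that the Sylvester
map `(r, s) ↦ rP + sQ` (with `deg r < deg Q`, `deg s < deg P`) is injective.
Then any nonzero polynomial of smallest degree in the image of the Sylvester
map is a constant polynomial. -/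
theorem smallest_degree_in_sylvester_image_is_constant
    (P Q : ℤ[X]) (hP : P.IsPrimitive) (hQ : Q.IsPrimitive)
    (hcop : IsCoprime (P.map (Int.castRingHom ℚ)) (Q.map (Int.castRingHom ℚ)))
    (hinj : Function.Injective
      (fun rs : Polynomial.degreeLT ℤ Q.natDegree × Polynomial.degreeLT ℤ P.natDegree =>
        (rs.1 : ℤ[X]) * P + (rs.2 : ℤ[X]) * Q))
    (F : ℤ[X]) (hF : F ≠ 0)
    (hFimg : ∃ r s : ℤ[X], r.degree < Q.degree ∧ s.degree < P.degree ∧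
      F = r * P + s * Q)
    (hFmin : ∀ G : ℤ[X], G ≠ 0 →
      (∃ r s : ℤ[X], r.degree < Q.degree ∧ s.degree < P.degree ∧
        G = r * P + s * Q) → F.degree ≤ G.degree) :
    F.degree = 0 :=
  smallest_degree_in_sylvester_image_is_constant_general P Q hcop F hF hFimg hFmin
end

section
/- Let P, Q ∈ ℤ[X] be monic coprime polynomials, let c = c(P,Q) be the congruence number, and suppose ℓⁿ exactly divides c. Then for any m > n there exist no algebraic integers α, β in a common finite extension K of ℚ_ℓ with P(α) = 0, Q(β) = 0 and v_ℓ(α - β) > m - 1. -/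
/-! Evaluating a Bézout identity `c = r P + s Q` at `α` gives `c = s(α) (Q(α) - Q(β))`, and
`α - β` divides `Q(α) - Q(β)` in the ring of elements of norm at most `1`, which is a subring
because the norm of `K` is nonarchimedean (it is `< 1` at `ℓ`). Hence `‖c‖ ≤ ‖α - β‖`, while
`‖c‖ = ℓ^(-n)` because `ℓ^n` exactly divides `c`. -/

open Polynomial

/-- A finite extension `K` of `ℚ_ℓ`, carrying a multiplicative norm
normalized by `‖ℓ‖ = ℓ⁻¹`, so that `v_ℓ(x) > m - 1 ↔ ‖x‖ < ℓ^(1-m)`. -/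
structure PadicExt (ℓ : ℕ) [Fact ℓ.Prime] where
  K : Type
  [nf : NormedField K]
  [alg : Algebra ℚ_[ℓ] K]
  [fin : FiniteDimensional ℚ_[ℓ] K]
  norm_ell : ‖(ℓ : K)‖ = (ℓ : ℝ)⁻¹

attribute [instance] PadicExt.nf PadicExt.alg PadicExt.fin

namespace IsUltrametricDist

/-- By Ostrowski's argument, a norm exceeding `1` at some natural number exceeds `1` at every
natural number `p > 1`. -/
theorem of_norm_natCast_le_one {K : Type*} [NormedField K] [CharZero K] {p : ℕ} (hp : 1 < p)
    (hpK : ‖(p : K)‖ ≤ 1) : IsUltrametricDist K := by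
  let f : AbsoluteValue ℚ ℝ :=
    (IsAbsoluteValue.toAbsoluteValue (norm : K → ℝ)).comp (Rat.castHom K).injective
  have hf (k : ℕ) : f k = ‖(k : K)‖ := congrArg norm (Rat.cast_natCast k)
  refine isUltrametricDist_of_forall_norm_natCast_le_one fun k => ?_
  by_contra hk
  have := Rat.AbsoluteValue.one_lt_of_not_bounded (f := f) (fun hb => hk (hf k ▸ hb k)) hp
  exact this.not_ge (hf p ▸ hpK)

variable {K : Type*} [NormedField K] [IsUltrametricDist K]

theorem norm_natCast_eq_one_of_not_dvd {p u : ℕ} (hp : p.Prime) (hpK : ‖(p : K)‖ < 1)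
    (hu : ¬ p ∣ u) : ‖(u : K)‖ = 1 := by
  obtain ⟨a, b, hab⟩ : IsCoprime (u : ℤ) p :=
    Nat.isCoprime_iff_coprime.mpr ((hp.coprime_iff_not_dvd.mpr hu).symm)
  have hab' : (a * u + b * p : K) = 1 := by exact_mod_cast congrArg (Int.cast : ℤ → K) hab
  have hsmall (z : ℤ) (x : K) (hx : ‖x‖ < 1) : ‖(z * x : K)‖ < 1 := by
    rw [norm_mul]
    exact (mul_le_of_le_one_left (norm_nonneg _) (norm_intCast_le_one K z)).trans_lt hx
  refine le_antisymm (norm_natCast_le_one K u) (not_lt.mp fun hlt => ?_)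
  have : ‖(1 : K)‖ < 1 := by
    rw [← hab']
    exact (norm_add_le_max _ _).trans_lt (max_lt (hsmall a _ hlt) (hsmall b _ hpK))
  exact this.ne norm_one

theorem norm_natCast_eq_pow_of_pow_dvd_of_not_dvd {p n c : ℕ} (hp : p.Prime)
    (hpK : ‖(p : K)‖ < 1) (hdvd : p ^ n ∣ c) (hndvd : ¬ p ^ (n + 1) ∣ c) :
    ‖(c : K)‖ = ‖(p : K)‖ ^ n := by
  obtain ⟨u, rfl⟩ := hdvd
  have hu : ¬ p ∣ u := fun h => hndvd (pow_succ p n ▸ mul_dvd_mul_left _ h)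
  rw [Nat.cast_mul, norm_mul, Nat.cast_pow, norm_pow, norm_natCast_eq_one_of_not_dvd hp hpK hu,
    mul_one]

end IsUltrametricDist

def Subring.unitClosedBall (R : Type*) [NormedRing R] [NormOneClass R] [IsUltrametricDist R] :
    Subring R :=
  { Submonoid.unitClosedBall R with
    zero_mem' := by simp
    add_mem' := fun {x y} hx hy => by
      simp only [Submonoid.unitClosedBall, Metric.mem_closedBall, dist_zero_right] at *
      exact (IsUltrametricDist.norm_add_le_max x y).trans (max_le hx hy)
    neg_mem' := fun {x} hx => by
      simpa only [Submonoid.unitClosedBall, Metric.mem_closedBall, dist_zero_right, norm_neg]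
        using hx }

@[simp]
theorem Subring.mem_unitClosedBall {R : Type*} [NormedRing R] [NormOneClass R]
    [IsUltrametricDist R] {x : R} : x ∈ Subring.unitClosedBall R ↔ ‖x‖ ≤ 1 :=
  mem_closedBall_zero_iff

theorem sub_dvd_aeval_sub_aeval {R : Type*} [CommRing R] (a b : R) (Q : ℤ[X]) :
    a - b ∣ aeval a Q - aeval b Q := by
  simpa only [aeval_def, eval₂_eq_eval_map] using sub_dvd_eval_sub a b (Q.map (algebraMap ℤ R))

theorem sub_dvd_intCast_of_C_eq_mul_add_mul {R : Type*} [CommRing R] {k : ℤ} {r s P Q : ℤ[X]}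
    (hk : C k = r * P + s * Q) {a b : R} (ha : aeval a P = 0) (hb : aeval b Q = 0) :
    a - b ∣ (k : R) := by
  have hka : (k : R) = aeval a s * (aeval a Q - aeval b Q) := by
    simpa [ha, hb] using congrArg (aeval a) hk
  exact hka ▸ dvd_mul_of_dvd_right (sub_dvd_aeval_sub_aeval a b Q) _

theorem norm_intCast_le_norm_sub_of_C_eq_mul_add_mul {K : Type*} [NormedField K]
    [IsUltrametricDist K] {k : ℤ} {r s P Q : ℤ[X]} (hk : C k = r * P + s * Q) {α β : K}
    (hα : ‖α‖ ≤ 1) (hβ : ‖β‖ ≤ 1) (hPα : aeval α P = 0) (hQβ : aeval β Q = 0) :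
    ‖(k : K)‖ ≤ ‖α - β‖ := by
  let O := Subring.unitClosedBall K
  let a : O := ⟨α, Subring.mem_unitClosedBall.mpr hα⟩
  let b : O := ⟨β, Subring.mem_unitClosedBall.mpr hβ⟩
  have hroot {x : O} {T : ℤ[X]} (h : aeval (x : K) T = 0) : aeval x T = 0 := by
    apply Subtype.val_injective
    rw [ZeroMemClass.coe_zero, ← h]
    exact (aeval_algHom_apply O.subtype.toIntAlgHom x T).symm
  obtain ⟨w, hw⟩ :=
    sub_dvd_intCast_of_C_eq_mul_add_mul hk (a := a) (b := b) (hroot hPα) (hroot hQβ)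
  have hw' : (k : K) = (α - β) * w := congrArg Subtype.val hw
  rw [hw', norm_mul]
  exact mul_le_of_le_one_right (norm_nonneg _) (Subring.mem_unitClosedBall.mp w.2)

namespace PadicExt

variable {ℓ : ℕ} [Fact ℓ.Prime] (E : PadicExt ℓ)

instance : CharZero E.K := charZero_of_injective_algebraMap (algebraMap ℚ_[ℓ] E.K).injective

theorem norm_natCast_lt_one : ‖(ℓ : E.K)‖ < 1 := by
  rw [E.norm_ell]
  exact inv_lt_one_of_one_lt₀ (mod_cast (Fact.out : ℓ.Prime).one_lt)

instance : IsUltrametricDist E.K :=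
  .of_norm_natCast_le_one (Fact.out : ℓ.Prime).one_lt E.norm_natCast_lt_one.le

end PadicExt

theorem no_congruence_beyond_congruence_number_general (ℓ : ℕ) [Fact ℓ.Prime]
    (P Q : ℤ[X])
    (c : ℕ)
    (hc : IsLeast {k : ℕ | 0 < k ∧ ∃ r s : ℤ[X],
      r.degree < Q.degree ∧ s.degree < P.degree ∧
      (Polynomial.C (k : ℤ)) = r * P + s * Q} c)
    (n : ℕ) (hn : ℓ ^ n ∣ c ∧ ¬ ℓ ^ (n + 1) ∣ c) :
    ∀ m : ℕ, n < m →
      ¬ ∃ (E : PadicExt ℓ) (α β : E.K),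
        Polynomial.aeval α P = 0 ∧ Polynomial.aeval β Q = 0 ∧
        ‖α‖ ≤ 1 ∧ ‖β‖ ≤ 1 ∧ ‖α - β‖ < (ℓ : ℝ) ^ ((1 : ℤ) - (m : ℤ)) := by
  rintro m hnm ⟨E, α, β, hPα, hQβ, hα, hβ, hclose⟩
  obtain ⟨-, r, s, -, -, hbezout⟩ := hc.1
  have hc_le := norm_intCast_le_norm_sub_of_C_eq_mul_add_mul hbezout hα hβ hPα hQβ
  rw [Int.cast_natCast, IsUltrametricDist.norm_natCast_eq_pow_of_pow_dvd_of_not_dvd Fact.out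
    E.norm_natCast_lt_one hn.1 hn.2, E.norm_ell] at hc_le
  have hpow : (ℓ : ℝ) ^ ((1 : ℤ) - m) ≤ (ℓ : ℝ)⁻¹ ^ n := by
    rw [inv_pow, ← zpow_natCast, ← zpow_neg]
    exact zpow_le_zpow_right₀ (mod_cast (Fact.out : ℓ.Prime).one_le) (by omega)
  linarith

/-- Let `P, Q ∈ ℤ[X]` be monic coprime polynomials and suppose `ℓⁿ` exactly
divides the congruence number `c = c(P,Q)`.  Then for any `m > n` there are no
algebraic integers `α, β` in a common finite extension `K` of `ℚ_ℓ` with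
`P(α) = 0`, `Q(β) = 0` and `v_ℓ(α - β) > m - 1`
(equivalently `‖α - β‖ < ℓ^(1-m)`). -/
theorem no_congruence_beyond_congruence_number (ℓ : ℕ) [Fact ℓ.Prime]
    (P Q : ℤ[X]) (hPm : P.Monic) (hQm : Q.Monic)
    (hcop : IsCoprime (P.map (Int.castRingHom ℚ)) (Q.map (Int.castRingHom ℚ)))
    (c : ℕ)
    (hc : IsLeast {k : ℕ | 0 < k ∧ ∃ r s : ℤ[X],
      r.degree < Q.degree ∧ s.degree < P.degree ∧
      (Polynomial.C (k : ℤ)) = r * P + s * Q} c)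
    (n : ℕ) (hn : ℓ ^ n ∣ c ∧ ¬ ℓ ^ (n + 1) ∣ c) :
    ∀ m : ℕ, n < m →
      ¬ ∃ (E : PadicExt ℓ) (α β : E.K),
        Polynomial.aeval α P = 0 ∧ Polynomial.aeval β Q = 0 ∧
        ‖α‖ ≤ 1 ∧ ‖β‖ ≤ 1 ∧ ‖α - β‖ < (ℓ : ℝ) ^ ((1 : ℤ) - (m : ℤ)) :=
  no_congruence_beyond_congruence_number_general ℓ P Q c hc n hn
end

section
/- Let P, Q ∈ ℤ[X] be primitive coprime monic polynomials. Then the reductions of P and Q modulo ℓ have a non-trivial common divisor in 𝔽_ℓ[X] if and only if ℓ divides the congruence number c(P,Q). -/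
/-!
Reducing a Sylvester relation `C c = r * P + s * Q` modulo `ℓ` shows that a common factor of
positive degree of `P̄` and `Q̄` divides the constant `c̄`, so `ℓ ∣ c`. Conversely, if `P̄` and
`Q̄` are coprime and `ℓ ∣ c`, the reduced relation `0 = r̄ * P̄ + s̄ * Q̄` together with the degree
bounds forces `r̄ = s̄ = 0`; dividing the relation by `ℓ` then produces the smaller Sylvester
constant `c / ℓ`, contradicting minimality.
-/

open Polynomial

namespace Polynomial

section Domain

variable {R : Type*} [CommRing R] [IsDomain R]

theorem eq_zero_of_C_eq_mul_add_mul_of_dvd {d a b r s : R[X]} {x : R} (hd : 0 < d.degree)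
    (ha : d ∣ a) (hb : d ∣ b) (h : C x = r * a + s * b) : x = 0 := by
  by_contra hx
  have hdx : d ∣ C x := h ▸ dvd_add (ha.mul_left r) (hb.mul_left s)
  have := degree_le_of_dvd hdx (C_ne_zero.mpr hx)
  rw [degree_C hx] at this
  exact this.not_gt hd

theorem eq_zero_of_mul_add_mul_eq_zero_of_degree_lt {a b r s : R[X]} (hab : IsCoprime a b)
    (h : r * a + s * b = 0) (hr : r.degree < b.degree) : r = 0 := by
  by_contra hr0
  have hbr : b ∣ r := hab.symm.dvd_of_dvd_mul_right ⟨-s, by linear_combination h⟩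
  exact (degree_le_of_dvd hbr hr0).not_gt hr

end Domain

theorem isCoprime_of_forall_degree_pos {K : Type*} [Field K] {a b : K[X]} (ha : a ≠ 0)
    (h : ∀ d : K[X], 0 < d.degree → d ∣ a → ¬d ∣ b) : IsCoprime a b :=
  EuclideanDomain.isCoprime_of_dvd (fun hab => ha hab.1) fun d hd hd0 =>
    h d (degree_pos_of_ne_zero_of_nonunit hd0 hd)

theorem C_dvd_iff_map_eq_zero (ℓ : ℕ) (f : ℤ[X]) :
    C (ℓ : ℤ) ∣ f ↔ f.map (Int.castRingHom (ZMod ℓ)) = 0 := by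
  rw [C_dvd_iff_dvd_coeff, Polynomial.ext_iff]
  simp only [coeff_map, coeff_zero, eq_intCast, ZMod.intCast_zmod_eq_zero_iff_dvd]

end Polynomial

def IsSylvesterConstant (P Q : ℤ[X]) (k : ℕ) : Prop :=
  ∃ r s : ℤ[X], r.degree < Q.degree ∧ s.degree < P.degree ∧ C (k : ℤ) = r * P + s * Q

namespace IsSylvesterConstant

variable {P Q : ℤ[X]} {k : ℕ}

theorem natCast_eq_zero_of_dvd {ℓ : ℕ} [Fact ℓ.Prime] (hk : IsSylvesterConstant P Q k)
    {d : (ZMod ℓ)[X]} (hd : 0 < d.degree) (hdP : d ∣ P.map (Int.castRingHom (ZMod ℓ)))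
    (hdQ : d ∣ Q.map (Int.castRingHom (ZMod ℓ))) : (k : ZMod ℓ) = 0 := by
  obtain ⟨r, s, -, -, h⟩ := hk
  have h' := congrArg (map (Int.castRingHom (ZMod ℓ))) h
  rw [Polynomial.map_add, Polynomial.map_mul, Polynomial.map_mul, map_C, eq_intCast,
    Int.cast_natCast] at h'
  exact eq_zero_of_C_eq_mul_add_mul_of_dvd hd hdP hdQ h'

theorem of_prime_mul {ℓ : ℕ} [hℓ : Fact ℓ.Prime] (hPm : P.Monic) (hQm : Q.Monic)
    (hcop : IsCoprime (P.map (Int.castRingHom (ZMod ℓ))) (Q.map (Int.castRingHom (ZMod ℓ))))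
    (hk : IsSylvesterConstant P Q (ℓ * k)) : IsSylvesterConstant P Q k := by
  obtain ⟨r, s, hr, hs, h⟩ := hk
  set f := Int.castRingHom (ZMod ℓ)
  have hred : r.map f * P.map f + s.map f * Q.map f = 0 := by
    have h' := congrArg (map f) h
    rw [Polynomial.map_add, Polynomial.map_mul, Polynomial.map_mul, map_C] at h'
    rw [← h']
    simp [f]
  have hrQ : (r.map f).degree < (Q.map f).degree :=
    hQm.degree_map f ▸ degree_map_le.trans_lt hr
  have hsP : (s.map f).degree < (P.map f).degree :=
    hPm.degree_map f ▸ degree_map_le.trans_lt hs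
  obtain ⟨r', rfl⟩ := (C_dvd_iff_map_eq_zero ℓ r).mpr
    (eq_zero_of_mul_add_mul_eq_zero_of_degree_lt hcop hred hrQ)
  obtain ⟨s', rfl⟩ := (C_dvd_iff_map_eq_zero ℓ s).mpr
    (eq_zero_of_mul_add_mul_eq_zero_of_degree_lt hcop.symm ((add_comm _ _).trans hred) hsP)
  have hℓ : (ℓ : ℤ) ≠ 0 := Int.natCast_ne_zero.mpr hℓ.out.ne_zero
  refine ⟨r', s', degree_C_mul hℓ ▸ hr, degree_C_mul hℓ ▸ hs, mul_left_cancel₀ (C_ne_zero.mpr hℓ) ?_⟩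
  rw [← C_mul, ← Nat.cast_mul, h]
  ring

end IsSylvesterConstant

theorem common_divisor_mod_ell_iff_ell_dvd_congruence_number_general
    (ℓ : ℕ) [Fact ℓ.Prime] (P Q : ℤ[X]) (hPm : P.Monic) (hQm : Q.Monic)
    (c : ℕ)
    (hc : IsLeast {k : ℕ | 0 < k ∧ ∃ r s : ℤ[X],
      r.degree < Q.degree ∧ s.degree < P.degree ∧
      (Polynomial.C (k : ℤ)) = r * P + s * Q} c) :
    (∃ d : Polynomial (ZMod ℓ), 0 < d.degree ∧
        d ∣ P.map (Int.castRingHom (ZMod ℓ)) ∧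
        d ∣ Q.map (Int.castRingHom (ZMod ℓ))) ↔ ℓ ∣ c := by
  obtain ⟨⟨hc0, hcP⟩, hmin⟩ := hc
  constructor
  · rintro ⟨d, hd, hdP, hdQ⟩
    exact (ZMod.natCast_eq_zero_iff c ℓ).mp
      (IsSylvesterConstant.natCast_eq_zero_of_dvd hcP hd hdP hdQ)
  · rintro ⟨k, rfl⟩
    by_contra! hnod
    have hcop := isCoprime_of_forall_degree_pos (hPm.map _).ne_zero hnod
    have hk : 0 < k := Nat.pos_of_mul_pos_left hc0
    have hle : ℓ * k ≤ k := hmin ⟨hk, IsSylvesterConstant.of_prime_mul hPm hQm hcop hcP⟩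
    have hℓ : 2 ≤ ℓ := (Fact.out : ℓ.Prime).two_le
    nlinarith

/-- Let `P, Q ∈ ℤ[X]` be primitive coprime monic polynomials with congruence
number `c(P,Q)` (the smallest positive integer in the image of the Sylvester
map).  Then the reductions of `P` and `Q` modulo `ℓ` have a non-trivial common
divisor in `𝔽_ℓ[X]` if and only if `ℓ` divides `c(P,Q)`. -/
theorem common_divisor_mod_ell_iff_ell_dvd_congruence_number
    (ℓ : ℕ) [Fact ℓ.Prime] (P Q : ℤ[X]) (hPm : P.Monic) (hQm : Q.Monic)
    (hP : P.IsPrimitive) (hQ : Q.IsPrimitive)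
    (hcop : IsCoprime (P.map (Int.castRingHom ℚ)) (Q.map (Int.castRingHom ℚ)))
    (c : ℕ)
    (hc : IsLeast {k : ℕ | 0 < k ∧ ∃ r s : ℤ[X],
      r.degree < Q.degree ∧ s.degree < P.degree ∧
      (Polynomial.C (k : ℤ)) = r * P + s * Q} c) :
    (∃ d : Polynomial (ZMod ℓ), 0 < d.degree ∧
        d ∣ P.map (Int.castRingHom (ZMod ℓ)) ∧
        d ∣ Q.map (Int.castRingHom (ZMod ℓ))) ↔ ℓ ∣ c :=
  common_divisor_mod_ell_iff_ell_dvd_congruence_number_general ℓ P Q hPm hQm c hc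
end

section
/- Suppose P̄ ∈ 𝔽_ℓ[X] is irreducible and Q ∈ ℤ_ℓ[X] is irreducible, with P, Q monic coprime, and write c(P,Q) = rP + sQ with deg s < deg P. Then s̄ and Q̄ are coprime in 𝔽_ℓ[X]. -/
/-!
Reducing `C c = r * P + s * Q` modulo `ℓ` gives `r̄ P̄ + s̄ Q̄ = 0`, and the minimality of `‖c‖`
forces `s̄ ≠ 0` (otherwise `ℓ` could be divided out of the identity). As `deg s̄ < deg P̄`, the
irreducible `P̄` divides `Q̄` but not `s̄`.

Hensel's lemma stops `Q̄` from splitting into two coprime non-units: `ℤ_ℓ[X]/(Q)` is a domain,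
finite over `ℤ_ℓ` and therefore `ℓ`-adically complete, so idempotents of its reduction
`𝔽_ℓ[X]/(Q̄)` lift to idempotents of a domain and are trivial, whereas a coprime factorisation
`Q̄ = f g` would produce a non-trivial one. Hence `Q̄` is a power of `P̄` times a unit, and is
coprime to `s̄`.
-/

open Polynomial

theorem IsPrecomplete.of_finite {R : Type*} [CommRing R] (I : Ideal R) [IsPrecomplete I R]
    (M : Type*) [AddCommGroup M] [Module R M] [Module.Finite R M] : IsPrecomplete I M := by
  rw [← AdicCompletion.of_surjective_iff]
  intro y
  obtain ⟨t, rfl⟩ := AdicCompletion.ofTensorProduct_surjective_of_finite I M y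
  induction t using TensorProduct.induction_on with
  | zero => exact ⟨0, by simp⟩
  | tmul r x =>
    obtain ⟨r, rfl⟩ := AdicCompletion.of_surjective I R r
    refine ⟨r • x, ?_⟩
    rw [AdicCompletion.ofTensorProduct_tmul, map_smul, ← algebraMap_smul (AdicCompletion I R) r]
    rfl
  | add t₁ t₂ h₁ h₂ =>
    obtain ⟨x₁, hx₁⟩ := h₁
    obtain ⟨x₂, hx₂⟩ := h₂
    exact ⟨x₁ + x₂, by rw [map_add, map_add, hx₁, hx₂]⟩

theorem IsAdicComplete.of_finite {R : Type*} [CommRing R] [IsNoetherianRing R] (I : Ideal R)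
    [IsAdicComplete I R] (M : Type*) [AddCommGroup M] [Module R M] [Module.Finite R M] :
    IsAdicComplete I M where
  toIsHausdorff := .of_le_jacobson I M (IsAdicComplete.le_jacobson_bot I)
  toIsPrecomplete := .of_finite I M

theorem HenselianRing.of_finite {R : Type*} [CommRing R] [IsNoetherianRing R] (I : Ideal R)
    [IsAdicComplete I R] (S : Type*) [CommRing S] [Algebra R S] [Module.Finite R S] :
    HenselianRing S (I.map (algebraMap R S)) :=
  have : IsAdicComplete (I.map (algebraMap R S)) S :=
    (IsAdicComplete.map_algebraMap_iff I S).mpr (.of_finite I S)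
  IsAdicComplete.henselianRing S _

theorem HenselianRing.eq_zero_or_eq_one_of_isIdempotentElem {R : Type*} [CommRing R] [IsDomain R]
    (I : Ideal R) [HenselianRing R I] {x : R ⧸ I} (hx : IsIdempotentElem x) : x = 0 ∨ x = 1 := by
  obtain ⟨a₀, rfl⟩ := Ideal.Quotient.mk_surjective x
  have hmonic : (X * (X - 1) : R[X]).Monic := monic_X.mul (monic_X_sub_C 1)
  have hroot : (X * (X - 1) : R[X]).eval a₀ ∈ I := by
    rw [← Ideal.Quotient.eq_zero_iff_mem]
    simp only [eval_mul, eval_sub, eval_X, map_mul, map_sub, mul_sub, mul_one,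
      hx.eq, sub_self]
  -- `2 a₀ - 1` squares to `1` modulo `I`, so the root `a₀` is simple.
  have hsimple : IsUnit (Ideal.Quotient.mk I ((X * (X - 1) : R[X]).derivative.eval a₀)) := by
    refine .of_mul_eq_one (Ideal.Quotient.mk I (2 * a₀ - 1)) ?_
    simp only [derivative_mul, derivative_X, derivative_sub, derivative_one, sub_zero, one_mul,
      mul_one, eval_add, eval_sub, eval_X, eval_one, ← map_mul]
    rw [show (a₀ - 1 + a₀) * (2 * a₀ - 1) = 4 * (a₀ * a₀ - a₀) + 1 by ring, map_add, map_one,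
      map_mul, map_sub, map_mul, hx.eq, sub_self, mul_zero, zero_add]
  obtain ⟨a, ha, haa₀⟩ := HenselianRing.is_henselian _ hmonic a₀ hroot hsimple
  have hmk : Ideal.Quotient.mk I a = Ideal.Quotient.mk I a₀ := Ideal.Quotient.eq.mpr haa₀
  rw [← hmk]
  rcases mul_eq_zero.mp (by simpa using ha : a * (a - 1) = 0) with h | h
  · exact .inl (by rw [h, map_zero])
  · exact .inr (by rw [sub_eq_zero.mp h, map_one])

theorem isUnit_or_isUnit_of_isCoprime {A : Type*} [CommRing A] {f g : A} (hfg : IsCoprime f g)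
    (hidem : ∀ e : A ⧸ Ideal.span {f * g}, IsIdempotentElem e → e = 0 ∨ e = 1) :
    IsUnit f ∨ IsUnit g := by
  obtain ⟨u, v, huv⟩ := hfg
  have hidem' : IsIdempotentElem (Ideal.Quotient.mk (Ideal.span {f * g}) (v * g)) := by
    rw [IsIdempotentElem, ← map_mul, Ideal.Quotient.mk_eq_mk_iff_sub_mem,
      Ideal.mem_span_singleton]
    exact ⟨-(u * v), by linear_combination (v * g) * huv⟩
  rcases hidem _ hidem' with h | h
  · rw [Ideal.Quotient.eq_zero_iff_mem, Ideal.mem_span_singleton] at h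
    refine .inl (isUnit_of_dvd_one ?_)
    rw [← huv]
    exact dvd_add (dvd_mul_left f u) ((dvd_mul_right f g).trans h)
  · rw [← map_one (Ideal.Quotient.mk _), Ideal.Quotient.mk_eq_mk_iff_sub_mem,
      Ideal.mem_span_singleton] at h
    refine .inr (isUnit_of_dvd_one ?_)
    have hg : g ∣ u * f := by
      rw [show u * f = -(v * g - 1) by linear_combination huv]
      exact ((dvd_mul_left g f).trans h).neg_right
    rw [← huv]
    exact dvd_add hg (dvd_mul_left g v)

theorem Polynomial.Monic.isUnit_or_isUnit_of_map_mk_eq_mul {R : Type*} [CommRing R]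
    [IsNoetherianRing R] {I : Ideal R} [IsAdicComplete I R] {Q : R[X]} (hQ : Q.Monic)
    (hQp : Prime Q) {f g : (R ⧸ I)[X]} (hfg : Q.map (Ideal.Quotient.mk I) = f * g)
    (hcop : IsCoprime f g) : IsUnit f ∨ IsUnit g := by
  have := AdjoinRoot.isDomain_of_prime hQp
  have := hQ.finite_adjoinRoot
  have := HenselianRing.of_finite I (AdjoinRoot Q)
  refine isUnit_or_isUnit_of_isCoprime hcop fun e he => ?_
  let ψ : AdjoinRoot Q ⧸ I.map (algebraMap R (AdjoinRoot Q)) ≃+*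
      (R ⧸ I)[X] ⧸ Ideal.span {f * g} :=
    (AdjoinRoot.quotAdjoinRootEquivQuotPolynomialQuot I Q).trans
      (Ideal.quotEquivOfEq (by rw [hfg]))
  simpa only [map_eq_zero_iff _ ψ.symm.injective, ψ.symm.map_eq_one_iff] using
    HenselianRing.eq_zero_or_eq_one_of_isIdempotentElem _ (he.map ψ.symm)

theorem Polynomial.Monic.isUnit_or_isUnit_of_map_eq_mul {R k : Type*} [CommRing R]
    [IsNoetherianRing R] [CommRing k] {φ : R →+* k} (hφ : Function.Surjective φ)
    [IsAdicComplete (RingHom.ker φ) R] {Q : R[X]} (hQ : Q.Monic)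
    (hQp : Prime Q) {f g : k[X]} (hfg : Q.map φ = f * g)
    (hcop : IsCoprime f g) : IsUnit f ∨ IsUnit g := by
  let e := Polynomial.mapEquiv (RingHom.quotientKerEquivOfSurjective hφ).symm
  have hfg' : Q.map (Ideal.Quotient.mk _) = e f * e g := by
    rw [← map_mul, ← hfg]
    simp only [e, mapEquiv_apply, Polynomial.map_map]
    congr 1
    ext x
    rw [RingHom.comp_apply, RingEquiv.coe_toRingHom, RingEquiv.eq_symm_apply]
    rfl
  simpa only [MulEquiv.isUnit_map] using
    hQ.isUnit_or_isUnit_of_map_mk_eq_mul hQp hfg' (hcop.map e.toRingHom)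

namespace PadicInt

variable {ℓ : ℕ} [Fact ℓ.Prime]

theorem C_dvd_of_map_toZMod_eq_zero {p : ℤ_[ℓ][X]} (hp : p.map toZMod = 0) :
    C (ℓ : ℤ_[ℓ]) ∣ p := by
  have hker : p ∈ RingHom.ker (mapRingHom (toZMod (p := ℓ))) := hp
  rwa [ker_mapRingHom, ker_toZMod, maximalIdeal_eq_span_p, Ideal.map_span, Set.image_singleton,
    Ideal.mem_span_singleton] at hker

theorem exists_norm_lt_of_map_toZMod_eq_zero {P Q r s : ℤ_[ℓ][X]} {c : ℤ_[ℓ]} (hc0 : c ≠ 0)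
    (hc1 : ‖c‖ < 1) (hrs : C c = r * P + s * Q) (hr : r.map toZMod = 0)
    (hs : s.map toZMod = 0) :
    ∃ c' r' s', c' ≠ 0 ∧ r'.degree = r.degree ∧ s'.degree = s.degree ∧
      C c' = r' * P + s' * Q ∧ ‖c‖ < ‖c'‖ := by
  obtain ⟨c', rfl⟩ := (norm_lt_one_iff_dvd c).mp hc1
  obtain ⟨r', rfl⟩ := C_dvd_of_map_toZMod_eq_zero hr
  obtain ⟨s', rfl⟩ := C_dvd_of_map_toZMod_eq_zero hs
  have hℓ : (ℓ : ℤ_[ℓ]) ≠ 0 := Nat.cast_ne_zero.mpr (Fact.out : ℓ.Prime).ne_zero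
  have hc' : c' ≠ 0 := right_ne_zero_of_mul hc0
  refine ⟨c', r', s', hc', (degree_C_mul hℓ).symm, (degree_C_mul hℓ).symm, ?_, ?_⟩
  · refine mul_left_cancel₀ (C_ne_zero.mpr hℓ) ?_
    rw [← C_mul, hrs]
    ring
  · rw [norm_mul, norm_p]
    have hℓ1 : (1 : ℝ) < ℓ := by exact_mod_cast (Fact.out : ℓ.Prime).one_lt
    exact (mul_lt_iff_lt_one_left (norm_pos_iff.mpr hc')).mpr (inv_lt_one_of_one_lt₀ hℓ1)

instance : IsAdicComplete (RingHom.ker (toZMod (p := ℓ))) ℤ_[ℓ] :=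
  ker_toZMod (p := ℓ) ▸ inferInstance

end PadicInt

theorem sbar_coprime_Qbar_general (ℓ : ℕ) [Fact ℓ.Prime]
    (P Q : Polynomial ℤ_[ℓ]) (hPm : P.Monic) (hQm : Q.Monic)
    (hPbar : Irreducible (P.map (PadicInt.toZMod (p := ℓ))))
    (hQirr : Irreducible Q)
    (c : ℤ_[ℓ]) (hc0 : c ≠ 0) (r s : Polynomial ℤ_[ℓ])
    (hr : r.degree < Q.degree) (hs : s.degree < P.degree)
    (hrs : (Polynomial.C c) = r * P + s * Q)
    (hmin : ∀ (c' : ℤ_[ℓ]) (r' s' : Polynomial ℤ_[ℓ]), c' ≠ 0 →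
      r'.degree < Q.degree → s'.degree < P.degree →
      (Polynomial.C c') = r' * P + s' * Q → ‖c'‖ ≤ ‖c‖)
    (hdvd : ‖c‖ < 1) :
    IsCoprime (s.map (PadicInt.toZMod (p := ℓ)))
      (Q.map (PadicInt.toZMod (p := ℓ))) := by
  set φ := PadicInt.toZMod (p := ℓ)
  have hc : φ c = 0 := by
    rwa [← RingHom.mem_ker, PadicInt.ker_toZMod, IsLocalRing.mem_maximalIdeal,
      PadicInt.mem_nonunits]
  have hred : r.map φ * P.map φ + s.map φ * Q.map φ = 0 := by
    rw [← Polynomial.map_mul, ← Polynomial.map_mul, ← Polynomial.map_add, ← hrs, map_C, hc, C_0]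
  have hs0 : s.map φ ≠ 0 := by
    intro hs0
    have hr0 : r.map φ = 0 := by simpa [hs0, (hPm.map φ).ne_zero] using hred
    obtain ⟨c', r', s', hc', hr', hs', hrs', hlt⟩ :=
      PadicInt.exists_norm_lt_of_map_toZMod_eq_zero hc0 hdvd hrs hr0 hs0
    exact (hmin c' r' s' hc' (hr' ▸ hr) (hs' ▸ hs) hrs').not_gt hlt
  have hPs : ¬ P.map φ ∣ s.map φ := fun h => (degree_le_of_dvd h hs0).not_gt <|
    (degree_map_le.trans_lt hs).trans_eq (hPm.degree_map _).symm
  have hPQ : P.map φ ∣ Q.map φ :=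
    (hPbar.prime.dvd_or_dvd ⟨-r.map φ, by linear_combination hred⟩).resolve_left hPs
  obtain ⟨n, b, hb, hQ⟩ := WfDvdMonoid.max_power_factor (hQm.map φ).ne_zero hPbar
  have hbu : IsUnit b := by
    refine (hQm.isUnit_or_isUnit_of_map_eq_mul (ZMod.ringHom_surjective φ) hQirr.prime hQ
      (hPbar.coprime_iff_not_dvd.mpr hb).pow_left).resolve_left fun hPn => ?_
    exact hb (hPn.dvd_mul_left.mp (hQ ▸ hPQ))
  rw [hQ, isCoprime_mul_unit_right_right hbu]
  exact (hPbar.coprime_iff_not_dvd.mpr hPs).symm.pow_right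

/-- Let `P, Q ∈ ℤ_ℓ[X]` be monic coprime polynomials with `P̄` irreducible in
`𝔽_ℓ[X]` and `Q` irreducible in `ℤ_ℓ[X]`, and write the congruence number
(a constant of lowest valuation in the image of the Sylvester map) as
`c = rP + sQ` with `deg r < deg Q`, `deg s < deg P`; assume `ℓ ∣ c`
(i.e. `‖c‖ < 1`).  Then `s̄` and `Q̄` are coprime in `𝔽_ℓ[X]`. -/
theorem sbar_coprime_Qbar (ℓ : ℕ) [Fact ℓ.Prime]
    (P Q : Polynomial ℤ_[ℓ]) (hPm : P.Monic) (hQm : Q.Monic)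
    (hcop : IsCoprime (P.map (algebraMap ℤ_[ℓ] ℚ_[ℓ])) (Q.map (algebraMap ℤ_[ℓ] ℚ_[ℓ])))
    (hPbar : Irreducible (P.map (PadicInt.toZMod (p := ℓ))))
    (hQirr : Irreducible Q)
    (c : ℤ_[ℓ]) (hc0 : c ≠ 0) (r s : Polynomial ℤ_[ℓ])
    (hr : r.degree < Q.degree) (hs : s.degree < P.degree)
    (hrs : (Polynomial.C c) = r * P + s * Q)
    (hmin : ∀ (c' : ℤ_[ℓ]) (r' s' : Polynomial ℤ_[ℓ]), c' ≠ 0 →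
      r'.degree < Q.degree → s'.degree < P.degree →
      (Polynomial.C c') = r' * P + s' * Q → ‖c'‖ ≤ ‖c‖)
    (hdvd : ‖c‖ < 1) :
    IsCoprime (s.map (PadicInt.toZMod (p := ℓ)))
      (Q.map (PadicInt.toZMod (p := ℓ))) :=
  sbar_coprime_Qbar_general ℓ P Q hPm hQm hPbar hQirr c hc0 r s hr hs hrs hmin hdvd
end

section
/- Let d ≥ 1 and let T be a d×d matrix over a commutative ring R with characteristic polynomial Σ_{i=0}^{d} c_i X^i. Fix δ ∈ R and r ≥ 1. Then the characteristic polynomial of the d(r+1) × d(r+1) block companion-type matrix (with blocks T, identities 1_d on the first superdiagonal, -δ·1_d in position (2,1), and zeros elsewhere as in the degeneracy-map matrix) equals Σ_{i=0}^{d} c_i X^{dr-i} (X² + δ)^i. -/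
/-!
Split off the last block: for `r ≥ 2` the last block row of the matrix vanishes, so passing from
`r` to `r + 1` multiplies the characteristic polynomial by `X ^ d`, and it suffices to treat
`r = 1`. There the characteristic matrix `[[X - T, -1], [δ, X]]`, multiplied on the right by
`[[X, 0], [-δ, 1]]`, becomes block triangular with diagonal blocks `(X² + δ) - X T` and `X`;
cancelling `X ^ d` leaves `det ((X² + δ) - X T)`, a homogenisation of the characteristic
polynomial of `T`, which is evaluated over Laurent polynomials, where `X` is a unit.
-/

open Polynomial Matrix

section Homogenization

variable {S : Type*} [CommRing S] {n : Type*} [Fintype n] [DecidableEq n]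

theorem det_smul_one_sub_smul_of_isUnit (M : Matrix n n S) (a : S) {b : S} (hb : IsUnit b) :
    det (a • (1 : Matrix n n S) - b • M) =
      ∑ i ∈ Finset.range (Fintype.card n + 1),
        M.charpoly.coeff i * b ^ (Fintype.card n - i) * a ^ i := by
  nontriviality S
  obtain ⟨u, rfl⟩ := hb
  have hfactor : a • (1 : Matrix n n S) - (u : S) • M = (u : S) • (scalar n (↑u⁻¹ * a) - M) := by
    rw [smul_sub, scalar_apply, ← smul_one_eq_diagonal, smul_smul, Units.mul_inv_cancel_left]
  have hdeg : M.charpoly.natDegree < Fintype.card n + 1 := by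
    rw [charpoly_natDegree_eq_dim]; omega
  rw [hfactor, det_smul, ← eval_charpoly, eval_eq_sum_range' hdeg, Finset.mul_sum]
  refine Finset.sum_congr rfl fun i hi => ?_
  have hi : i ≤ Fintype.card n := Nat.lt_succ_iff.mp (Finset.mem_range.mp hi)
  have hu : (u : S) ^ i * (↑u⁻¹ : S) ^ i = 1 := by rw [← mul_pow, Units.mul_inv, one_pow]
  rw [← Nat.sub_add_cancel hi, pow_add, Nat.add_sub_cancel]
  linear_combination (M.charpoly.coeff i * ↑u ^ (Fintype.card n - i) * a ^ i) * hu

end Homogenization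

section BlockMatrix

variable {R : Type*} [CommRing R] {n : Type*} [Fintype n] [DecidableEq n]

theorem det_X_sq_add_C_smul_one_sub_X_smul (M : Matrix n n R) (δ : R) :
    det ((X ^ 2 + C δ) • (1 : Matrix n n R[X]) - (X : R[X]) • M.map C) =
      ∑ i ∈ Finset.range (Fintype.card n + 1),
        C (M.charpoly.coeff i) * X ^ (Fintype.card n - i) * (X ^ 2 + C δ) ^ i := by
  apply toLaurent_injective
  have h := det_smul_one_sub_smul_of_isUnit (M.map LaurentPolynomial.C)
    (LaurentPolynomial.T 1 ^ 2 + LaurentPolynomial.C δ) (LaurentPolynomial.isUnit_T 1)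
  simp only [charpoly_map, coeff_map] at h
  rw [← coe_toLaurentAlg, AlgHom.map_det, map_sum]
  convert h using 1
  · congr 1
    ext i j
    by_cases hij : i = j <;> simp [hij]
  · simp only [_root_.map_mul, map_pow, _root_.map_add, coe_toLaurentAlg, toLaurent_C,
      toLaurent_X]

theorem charpoly_fromBlocks_one_neg_smul_one_zero (M : Matrix n n R) (δ : R) :
    (fromBlocks M 1 (-δ • (1 : Matrix n n R)) 0).charpoly =
      det ((X ^ 2 + C δ) • (1 : Matrix n n R[X]) - (X : R[X]) • M.map C) := by
  have hprod : charmatrix (fromBlocks M 1 (-δ • (1 : Matrix n n R)) 0) *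
      fromBlocks (scalar n (X : R[X])) 0 (scalar n (-C δ)) 1 =
      fromBlocks ((X ^ 2 + C δ) • 1 - (X : R[X]) • M.map C) (-1) 0 (scalar n X) := by
    rw [charmatrix_fromBlocks, fromBlocks_multiply]
    congr 1 <;> ext i j : 1 <;> by_cases hij : i = j <;> simp [hij, one_apply]
    ring
  have hdet := congrArg det hprod
  rw [det_mul, det_fromBlocks_zero₁₂, det_fromBlocks_zero₂₁, det_one, mul_one, scalar_apply,
    det_diagonal, Finset.prod_const, Finset.card_univ] at hdet
  exact (isRegular_X_pow _).right.eq_iff.mp hdet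

end BlockMatrix

section DegeneracyMatrix

variable {R : Type*} [CommRing R] {n : Type*} [DecidableEq n]

def degeneracyMatrix (T : Matrix n n R) (δ : R) (r : ℕ) :
    Matrix (Fin (r + 1) × n) (Fin (r + 1) × n) R :=
  of fun p q =>
    if (p.1 : ℕ) = 0 ∧ (q.1 : ℕ) = 0 then T p.2 q.2
    else if (q.1 : ℕ) = (p.1 : ℕ) + 1 then (if p.2 = q.2 then 1 else 0)
    else if (p.1 : ℕ) = 1 ∧ (q.1 : ℕ) = 0 then (if p.2 = q.2 then -δ else 0)
    else 0

variable [Fintype n]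

theorem charpoly_degeneracyMatrix_one (T : Matrix n n R) (δ : R) :
    (degeneracyMatrix T δ 1).charpoly =
      det ((X ^ 2 + C δ) • (1 : Matrix n n R[X]) - (X : R[X]) • T.map C) := by
  let e : Fin 2 × n ≃ n ⊕ n :=
    (finTwoEquiv.prodCongr (Equiv.refl n)).trans (Equiv.boolProdEquivSum n)
  have hblocks : reindex e e (degeneracyMatrix T δ 1) = fromBlocks T 1 (-δ • 1) 0 := by
    ext (i | i) (j | j) <;> by_cases hij : i = j <;>
      simp [e, degeneracyMatrix, finTwoEquiv, Equiv.boolProdEquivSum, one_apply, hij]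
  rw [← charpoly_reindex e, hblocks, charpoly_fromBlocks_one_neg_smul_one_zero]

theorem charpoly_degeneracyMatrix_succ (T : Matrix n n R) (δ : R) {r : ℕ} (hr : r ≠ 0) :
    (degeneracyMatrix T δ (r + 1)).charpoly =
      (degeneracyMatrix T δ r).charpoly * X ^ Fintype.card n := by
  let e : Fin (r + 1 + 1) × n ≃ (Fin (r + 1) × n) ⊕ (Fin 1 × n) :=
    (finSumFinEquiv.symm.prodCongr (Equiv.refl n)).trans (Equiv.sumProdDistrib _ _ _)
  rw [← charpoly_reindex e]
  set M := reindex e e (degeneracyMatrix T δ (r + 1))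
  have h₁₁ : M.toBlocks₁₁ = degeneracyMatrix T δ r := by
    ext p q
    simp [M, e, degeneracyMatrix, toBlocks₁₁, -Fin.val_eq_zero_iff]
  have h₂₁ : M.toBlocks₂₁ = 0 := by
    ext p q
    have hq : (q.1 : ℕ) ≠ r + 1 + 1 := by omega
    simp [M, e, degeneracyMatrix, toBlocks₂₁, -Fin.val_eq_zero_iff, hq, hr]
  have h₂₂ : M.toBlocks₂₂ = 0 := by
    ext p q
    simp [M, e, degeneracyMatrix, toBlocks₂₂, -Fin.val_eq_zero_iff]
  rw [← fromBlocks_toBlocks M, h₁₁, h₂₁, h₂₂, charpoly_fromBlocks_zero₂₁, charpoly_zero]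
  simp

theorem charpoly_degeneracyMatrix (T : Matrix n n R) (δ : R) {r : ℕ} (hr : 1 ≤ r) :
    (degeneracyMatrix T δ r).charpoly =
      ∑ i ∈ Finset.range (Fintype.card n + 1),
        C (T.charpoly.coeff i) * X ^ (Fintype.card n * r - i) * (X ^ 2 + C δ) ^ i := by
  induction r, hr using Nat.le_induction with
  | base => rw [charpoly_degeneracyMatrix_one, det_X_sq_add_C_smul_one_sub_X_smul, mul_one]
  | succ r hr ih =>
    rw [charpoly_degeneracyMatrix_succ T δ (by omega), ih, Finset.sum_mul]
    refine Finset.sum_congr rfl fun i hi => ?_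
    have hi : i ≤ Fintype.card n := Nat.lt_succ_iff.mp (Finset.mem_range.mp hi)
    have hexp : Fintype.card n * (r + 1) - i = Fintype.card n * r - i + Fintype.card n := by
      have := Nat.le_mul_of_pos_right (Fintype.card n) hr
      rw [Nat.mul_succ]; omega
    rw [hexp, pow_add]
    ring

end DegeneracyMatrix

theorem charpoly_degeneracy_block_matrix_general (R : Type) [CommRing R]
    (d r : ℕ) (hr : 1 ≤ r)
    (T : Matrix (Fin d) (Fin d) R) (δ : R) :
    (Matrix.of (fun p q : Fin (r + 1) × Fin d =>
      if (p.1 : ℕ) = 0 ∧ (q.1 : ℕ) = 0 then T p.2 q.2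
      else if (q.1 : ℕ) = (p.1 : ℕ) + 1 then (if p.2 = q.2 then (1 : R) else 0)
      else if (p.1 : ℕ) = 1 ∧ (q.1 : ℕ) = 0 then (if p.2 = q.2 then -δ else 0)
      else 0)).charpoly
      = ∑ i ∈ Finset.range (d + 1),
          Polynomial.C (T.charpoly.coeff i) * X ^ (d * r - i) *
            (X ^ 2 + Polynomial.C δ) ^ i := by
  have h := charpoly_degeneracyMatrix T δ hr
  rw [Fintype.card_fin] at h
  exact h

/-- Let `T` be a `d×d` matrix over a commutative ring `R` with characteristic
polynomial `Σ_{i=0}^d c_i X^i`, let `δ ∈ R` and `r ≥ 1`.  The characteristic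
polynomial of the `d(r+1) × d(r+1)` block matrix with `(1,1)`-block `T`,
identity blocks `1_d` on the first block-superdiagonal, `-δ·1_d` in block
position `(2,1)` and zeros elsewhere (the degeneracy-map matrix of the Hecke
operator on the old space) equals `Σ_{i=0}^d c_i X^{dr-i} (X² + δ)^i`. -/
theorem charpoly_degeneracy_block_matrix (R : Type) [CommRing R]
    (d r : ℕ) (hd : 1 ≤ d) (hr : 1 ≤ r)
    (T : Matrix (Fin d) (Fin d) R) (δ : R) :
    (Matrix.of (fun p q : Fin (r + 1) × Fin d =>
      if (p.1 : ℕ) = 0 ∧ (q.1 : ℕ) = 0 then T p.2 q.2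
      else if (q.1 : ℕ) = (p.1 : ℕ) + 1 then (if p.2 = q.2 then (1 : R) else 0)
      else if (p.1 : ℕ) = 1 ∧ (q.1 : ℕ) = 0 then (if p.2 = q.2 then -δ else 0)
      else 0)).charpoly
      = ∑ i ∈ Finset.range (d + 1),
          Polynomial.C (T.charpoly.coeff i) * X ^ (d * r - i) *
            (X ^ 2 + Polynomial.C δ) ^ i :=
  charpoly_degeneracy_block_matrix_general R d r hr T δ
end

section
/- Let T be a d×d matrix over an algebraically closed field with eigenvalues a₁,…,a_d, and δ a scalar. Then the characteristic polynomial of the 2d×2d block matrix [[T, 1_d],[-δ·1_d, 0_d]] equals Π_{j=1}^{d} (X² - a_j X + δ). -/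
/-!
The characteristic matrix of the block matrix is `[[X - T, -1], [δ, X]]`. Its two lower blocks are
scalar, hence commute, so its determinant is `det ((X - T) X + δ) = det ((X² + δ) - X T)`.
This is the characteristic polynomial of `T` homogenized at `(X² + δ, X)`, which factors as
`∏ j, (X² + δ - a_j X)` by passing to the fraction field of `F[X]`.
-/

open Polynomial

namespace Matrix

variable {n R : Type*} [Fintype n] [DecidableEq n]

theorem det_fromBlocks_of_commute [CommRing R] (A B C D : Matrix n n R) (hCD : Commute C D)
    (hD : IsRegular D.det) : (fromBlocks A B C D).det = (A * D - B * C).det := by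
  have hfactor :
      fromBlocks A B C D * fromBlocks D 0 (-C) 1 = fromBlocks (A * D - B * C) B 0 D := by
    simp [fromBlocks_multiply, hCD.eq, sub_eq_add_neg]
  apply hD.right.eq_iff.mp
  simpa [det_fromBlocks_zero₁₂, det_fromBlocks_zero₂₁] using congr_arg det hfactor

theorem det_smul_one_sub_smul_eq_pow_mul_eval_charpoly [Field R] (M : Matrix n n R) (p : R)
    {q : R} (hq : q ≠ 0) :
    (p • 1 - q • M).det = q ^ Fintype.card n * M.charpoly.eval (p / q) := by
  have hfactor : p • (1 : Matrix n n R) - q • M = q • (scalar n (p / q) - M) := by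
    rw [smul_sub, scalar_apply, ← smul_one_eq_diagonal, smul_smul, mul_div_cancel₀ p hq]
  rw [hfactor, det_smul, eval_charpoly]

theorem det_smul_one_sub_smul_of_charpoly_eq_prod [CommRing R] [IsDomain R] (M : Matrix n n R)
    (a : n → R) (hM : M.charpoly = ∏ j, (X - C (a j))) (p q : R) :
    (p • 1 - q • M).det = ∏ j, (p - q * a j) := by
  rcases eq_or_ne q 0 with rfl | hq
  · simp [Finset.prod_const]
  let φ := algebraMap R (FractionRing R)
  have hφ : Function.Injective φ := IsFractionRing.injective R (FractionRing R)
  have hqφ : φ q ≠ 0 := hφ.ne_iff' (map_zero φ) |>.mpr hq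
  have hMφ : (M.map φ).charpoly = ∏ j, (X - C (φ (a j))) := by
    simp [charpoly_map, hM, Polynomial.map_prod]
  have hmap : (p • 1 - q • M).map φ = φ p • 1 - φ q • M.map φ := by
    ext i j
    by_cases hij : i = j <;> simp [hij]
  apply hφ
  rw [RingHom.map_det, RingHom.mapMatrix_apply, hmap,
    det_smul_one_sub_smul_eq_pow_mul_eval_charpoly _ _ hqφ, hMφ, eval_prod, map_prod,
    ← Finset.card_univ, Finset.pow_card_mul_prod]
  refine Finset.prod_congr rfl fun j _ => ?_
  simp only [eval_sub, eval_X, eval_C, map_sub, map_mul]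
  rw [mul_sub, mul_div_cancel₀ _ hqφ]

end Matrix

theorem charpoly_two_by_two_block_general (F : Type) [Field F]
    (d : ℕ) (T : Matrix (Fin d) (Fin d) F) (δ : F) (a : Fin d → F)
    (ha : T.charpoly = ∏ j, (X - Polynomial.C (a j))) :
    (Matrix.fromBlocks T (1 : Matrix (Fin d) (Fin d) F)
        (-(δ • (1 : Matrix (Fin d) (Fin d) F))) (0 : Matrix (Fin d) (Fin d) F)).charpoly
      = ∏ j, (X ^ 2 - Polynomial.C (a j) * X + Polynomial.C δ) := by
  have hblocks : (Matrix.fromBlocks T 1 (-(δ • 1)) (0 : Matrix (Fin d) (Fin d) F)).charmatrix =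
      Matrix.fromBlocks T.charmatrix (-1) (C δ • 1) ((X : F[X]) • 1) := by
    rw [Matrix.charmatrix_fromBlocks]
    congr 1 <;> ext i j <;> by_cases hij : i = j <;> simp [hij]
  have hschur : T.charmatrix * ((X : F[X]) • 1) - (-1) * (C δ • 1) =
      (X ^ 2 + C δ) • 1 - (X : F[X]) • T.map C := by
    rw [Matrix.charmatrix, RingHom.mapMatrix_apply, Matrix.scalar_apply,
      ← Matrix.smul_one_eq_diagonal]
    simp only [sub_mul, Matrix.mul_smul, Matrix.mul_one, neg_mul]
    module
  have hTC : (T.map C).charpoly = ∏ j, (X - C (C (a j))) := by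
    simp [Matrix.charpoly_map, ha, Polynomial.map_prod]
  rw [Matrix.charpoly, hblocks,
    Matrix.det_fromBlocks_of_commute _ _ _ _ (((Commute.one_right 1).smul_left _).smul_right _)
      (by simpa [Matrix.det_smul] using isRegular_X_pow d),
    hschur, Matrix.det_smul_one_sub_smul_of_charpoly_eq_prod _ _ hTC]
  exact Finset.prod_congr rfl fun j _ => by ring

/-- Let `T` be a `d×d` matrix over an algebraically closed field with
eigenvalues `a₁, …, a_d` (counted with multiplicity, i.e.
`charpoly T = Π_j (X - a_j)`) and let `δ` be a scalar.  Then the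
characteristic polynomial of the `2d×2d` block matrix `[[T, 1],[-δ·1, 0]]`
equals `Π_{j=1}^d (X² - a_j X + δ)`. -/
theorem charpoly_two_by_two_block (F : Type) [Field F] [IsAlgClosed F]
    (d : ℕ) (T : Matrix (Fin d) (Fin d) F) (δ : F) (a : Fin d → F)
    (ha : T.charpoly = ∏ j, (X - Polynomial.C (a j))) :
    (Matrix.fromBlocks T (1 : Matrix (Fin d) (Fin d) F)
        (-(δ • (1 : Matrix (Fin d) (Fin d) F))) (0 : Matrix (Fin d) (Fin d) F)).charpoly
      = ∏ j, (X ^ 2 - Polynomial.C (a j) * X + Polynomial.C δ) :=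
  charpoly_two_by_two_block_general F d T δ a ha
end
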